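/- For every nonzero $x\in\mathbb{R}$ and every $s>0$, the Laplace transform in time of the second spatial derivative of the heat kernel satisfies $\int_0^\infty e^{-st}\,\partial_x^2 p(t,x)\,dt=\sqrt{2s}\;e^{-|x|\sqrt{2s}}$. -/

import Mathlib

open MeasureTheory

noncomputable section

/-- The Gaussian heat kernel `p(t,x) = (2πt)^{-1/2} exp(-x²/(2t))`. -/
def heatKer (t x : ℝ) : ℝ :=
  (Real.sqrt (2 * Real.pi * t))⁻¹ * Real.exp (-x ^ 2 / (2 * t))

/-!
The heat kernel solves `∂ₜp = ½ ∂ₓ²p`, so integrating by parts in `t` turns the integral into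
`2s` times the Laplace transform of `p(·, x)`; the boundary terms vanish because `p(t, x) → 0`
both as `t → 0⁺` (for `x ≠ 0`) and as `t → ∞`. That transform is the classical
`∫₀^∞ e^{-st} t^{-1/2} e^{-c/t} dt = √(π/s) e^{-2√(cs)}` with `c = x²/2`, obtained from an explicit
primitive built out of the Gaussian integral `G(u) = ∫₀^u e^{-v²} dv`.
-/

open Real Set Filter Topology

theorem integral_Ioi_of_hasDerivAt_of_tendsto_nhdsGT {E : Type*} [NormedAddCommGroup E]
    [NormedSpace ℝ E] [CompleteSpace E] {f f' : ℝ → E} {a : ℝ} {m₀ m : E}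
    (hderiv : ∀ x ∈ Ioi a, HasDerivAt f (f' x) x) (f'int : IntegrableOn f' (Ioi a))
    (hf₀ : Tendsto f (𝓝[>] a) (𝓝 m₀)) (hf : Tendsto f atTop (𝓝 m)) :
    ∫ x in Ioi a, f' x = m - m₀ := by
  have hderiv' : ∀ x ∈ Ioi a, HasDerivAt (Function.update f a m₀) (f' x) x := fun x hx =>
    (hderiv x hx).congr_of_eventuallyEq <| by
      filter_upwards [eventually_ne_nhds (ne_of_gt hx)] with y hy
      exact Function.update_of_ne hy _ _
  have hcont : ContinuousWithinAt (Function.update f a m₀) (Ici a) a := by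
    rwa [continuousWithinAt_update_same, Ici_sdiff_left]
  have hf' : Tendsto (Function.update f a m₀) atTop (𝓝 m) :=
    hf.congr' <| by
      filter_upwards [eventually_ne_atTop a] with x hx
      exact (Function.update_of_ne hx _ _).symm
  simpa using integral_Ioi_of_hasDerivAt_of_tendsto hcont hderiv' f'int hf'

def gaussPrimitive (u : ℝ) : ℝ := ∫ v in (0 : ℝ)..u, exp (-v ^ 2)

lemma hasDerivAt_gaussPrimitive (u : ℝ) : HasDerivAt gaussPrimitive (exp (-u ^ 2)) u :=
  ((by fun_prop : Continuous fun v : ℝ => exp (-v ^ 2)).integral_hasStrictDerivAt 0 u).hasDerivAt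

lemma tendsto_gaussPrimitive_atTop : Tendsto gaussPrimitive atTop (𝓝 (√π / 2)) := by
  have h := intervalIntegral_tendsto_integral_Ioi 0
    (by simpa using (integrable_exp_neg_mul_sq one_pos).integrableOn) tendsto_id
  have hI : ∫ v in Ioi (0 : ℝ), exp (-v ^ 2) = √π / 2 := by
    simpa using integral_gaussian_Ioi 1
  rwa [hI] at h

lemma gaussPrimitive_neg (u : ℝ) : gaussPrimitive (-u) = -gaussPrimitive u := by
  have h := intervalIntegral.integral_comp_neg (a := 0) (b := u) fun v => exp (-v ^ 2)
  simp only [neg_sq, neg_zero] at h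
  rw [gaussPrimitive, gaussPrimitive, h, intervalIntegral.integral_symm]

lemma tendsto_gaussPrimitive_atBot : Tendsto gaussPrimitive atBot (𝓝 (-(√π / 2))) := by
  have h := (tendsto_gaussPrimitive_atTop.comp tendsto_neg_atBot_atTop).neg
  refine h.congr fun u => ?_
  simp [gaussPrimitive_neg]

lemma hasDerivAt_exp_mul_gaussPrimitive (a b : ℝ) {t : ℝ} (ht : 0 < t) :
    HasDerivAt (fun t => exp (2 * a * b) * gaussPrimitive (b * √t + a / √t))
      (exp (-b ^ 2 * t) * exp (-a ^ 2 / t) * ((b - a / t) / (2 * √t))) t := by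
  have hr : √t ≠ 0 := (sqrt_pos.mpr ht).ne'
  have hsqrt : HasDerivAt (fun t => √t) (1 / (2 * √t)) t := hasDerivAt_sqrt ht.ne'
  have hφ := (hsqrt.const_mul b).fun_add ((hasDerivAt_const t a).fun_div hsqrt hr)
  refine (((hasDerivAt_gaussPrimitive _).comp t hφ).const_mul _).congr_deriv ?_
  obtain ⟨r, hr0, rfl⟩ : ∃ r > 0, t = r ^ 2 := ⟨√t, sqrt_pos.mpr ht, (sq_sqrt ht.le).symm⟩
  rw [sqrt_sq hr0.le, ← mul_assoc, ← exp_add, ← exp_add]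
  field_simp
  ring_nf

/-- The factors `exp (± 2ab)` cancel the cross terms of `(b√t ± a/√t)²`, and the `t^(-3/2)` parts
of the two inner derivatives cancel in the sum. -/
def expNegDivPrimitive (a b t : ℝ) : ℝ :=
  exp (2 * a * b) * gaussPrimitive (b * √t + a / √t) +
    exp (-(2 * a * b)) * gaussPrimitive (b * √t - a / √t)

lemma hasDerivAt_expNegDivPrimitive (a b : ℝ) {t : ℝ} (ht : 0 < t) :
    HasDerivAt (expNegDivPrimitive a b)
      (b * (exp (-b ^ 2 * t) * ((√t)⁻¹ * exp (-a ^ 2 / t)))) t := by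
  have h := (hasDerivAt_exp_mul_gaussPrimitive a b ht).add
    (hasDerivAt_exp_mul_gaussPrimitive (-a) b ht)
  simp only [neg_div, ← sub_eq_add_neg, mul_neg, neg_mul, even_two.neg_pow] at h
  refine h.congr_deriv ?_
  field_simp
  ring

lemma integrableOn_exp_neg_mul_mul_inv_sqrt {s : ℝ} (hs : 0 < s) :
    IntegrableOn (fun t => exp (-s * t) * (√t)⁻¹) (Ioi 0) := by
  refine (integrableOn_rpow_mul_exp_neg_mul_rpow (s := -(1 / 2)) (p := 1) (by norm_num) one_pos
    hs).congr_fun (fun t ht => ?_) measurableSet_Ioi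
  simp only [rpow_one, rpow_neg (le_of_lt ht), ← sqrt_eq_rpow, mul_comm]

lemma integrableOn_exp_neg_mul_mul_inv_sqrt_mul_exp_neg_div {s c : ℝ} (hs : 0 < s)
    (hc : 0 ≤ c) : IntegrableOn (fun t => exp (-s * t) * ((√t)⁻¹ * exp (-c / t))) (Ioi 0) := by
  refine (integrableOn_exp_neg_mul_mul_inv_sqrt hs).mono' (by fun_prop) ?_
  filter_upwards [ae_restrict_mem measurableSet_Ioi] with t ht
  have hexp : exp (-c / t) ≤ 1 :=
    exp_le_one_iff.mpr (div_nonpos_of_nonpos_of_nonneg (neg_nonpos.mpr hc) ht.out.le)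
  rw [norm_of_nonneg (by positivity), ← mul_assoc]
  exact mul_le_of_le_one_right (by positivity) hexp

lemma tendsto_expNegDivPrimitive_atTop {a b : ℝ} (hb : 0 < b) :
    Tendsto (expNegDivPrimitive a b) atTop
      (𝓝 (exp (2 * a * b) * (√π / 2) + exp (-(2 * a * b)) * (√π / 2))) := by
  have hsqrt : Tendsto (fun t => b * √t) atTop atTop := tendsto_sqrt_atTop.const_mul_atTop hb
  have hinv : Tendsto (fun t => a / √t) atTop (𝓝 0) := tendsto_sqrt_atTop.const_div_atTop a
  exact ((tendsto_gaussPrimitive_atTop.comp (hsqrt.atTop_add hinv)).const_mul _).add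
    ((tendsto_gaussPrimitive_atTop.comp ((hsqrt.atTop_add hinv.neg).congr fun t =>
      (sub_eq_add_neg _ _).symm)).const_mul _)

lemma tendsto_expNegDivPrimitive_nhdsGT_zero {a b : ℝ} (ha : 0 < a) :
    Tendsto (expNegDivPrimitive a b) (𝓝[>] 0)
      (𝓝 (exp (2 * a * b) * (√π / 2) + exp (-(2 * a * b)) * -(√π / 2))) := by
  have hsqrt : Tendsto (fun t => b * √t) (𝓝[>] 0) (𝓝 0) := by
    simpa using ((continuous_sqrt.tendsto 0).const_mul b).mono_left nhdsWithin_le_nhds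
  have hinv : Tendsto (fun t => a / √t) (𝓝[>] 0) atTop := by
    refine ((tendsto_sqrt_atTop.comp tendsto_inv_nhdsGT_zero).const_mul_atTop ha).congr fun t => ?_
    simp [sqrt_inv, div_eq_mul_inv]
  exact ((tendsto_gaussPrimitive_atTop.comp (hsqrt.add_atTop hinv)).const_mul _).add
    ((tendsto_gaussPrimitive_atBot.comp ((hsqrt.add_atBot (tendsto_neg_atTop_atBot.comp hinv)).congr
      fun t => (sub_eq_add_neg _ _).symm)).const_mul _)

theorem integral_exp_neg_mul_mul_inv_sqrt_mul_exp_neg_div {s c : ℝ} (hs : 0 < s) (hc : 0 < c) :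
    ∫ t in Ioi 0, exp (-s * t) * ((√t)⁻¹ * exp (-c / t)) = √(π / s) * exp (-(2 * √(c * s))) := by
  have hderiv : ∀ t ∈ Ioi (0 : ℝ), HasDerivAt (fun t => expNegDivPrimitive √c √s t / √s)
      (exp (-s * t) * ((√t)⁻¹ * exp (-c / t))) t := fun t ht => by
    refine ((hasDerivAt_expNegDivPrimitive √c √s ht).div_const √s).congr_deriv ?_
    rw [sq_sqrt hs.le, sq_sqrt hc.le]
    field_simp
  rw [integral_Ioi_of_hasDerivAt_of_tendsto_nhdsGT hderiv
    (integrableOn_exp_neg_mul_mul_inv_sqrt_mul_exp_neg_div hs hc.le)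
    ((tendsto_expNegDivPrimitive_nhdsGT_zero (sqrt_pos.mpr hc)).div_const √s)
    ((tendsto_expNegDivPrimitive_atTop (sqrt_pos.mpr hs)).div_const √s), sqrt_div' _ hs.le,
    sqrt_mul hc.le]
  field_simp
  ring

lemma heatKer_nonneg (t x : ℝ) : 0 ≤ heatKer t x := by
  rw [heatKer]
  positivity

lemma heatKer_eq_mul_inv_sqrt_mul_exp (t x : ℝ) :
    heatKer t x = (√(2 * π))⁻¹ * ((√t)⁻¹ * exp (-(x ^ 2 / 2) / t)) := by
  rw [heatKer, sqrt_mul (by positivity), mul_inv, mul_assoc]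
  ring_nf

lemma heatKer_eq_heatKer_zero_mul_exp (t x : ℝ) :
    heatKer t x = heatKer t 0 * exp (-(x ^ 2 / (2 * t))) := by
  simp [heatKer, neg_div]

lemma hasDerivAt_heatKer (t y : ℝ) : HasDerivAt (heatKer t) (heatKer t y * (-y / t)) y := by
  have h := ((((hasDerivAt_pow 2 y).fun_neg).div_const (2 * t)).exp).const_mul (√(2 * π * t))⁻¹
  refine h.congr_deriv ?_
  rw [heatKer]
  ring

lemma iteratedDeriv_two_heatKer (t x : ℝ) :
    iteratedDeriv 2 (heatKer t) x = heatKer t x * (x ^ 2 / t ^ 2 - 1 / t) := by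
  have hderiv : deriv (heatKer t) = fun y => heatKer t y * (-y / t) :=
    funext fun y => (hasDerivAt_heatKer t y).deriv
  rw [iteratedDeriv_succ, iteratedDeriv_one, hderiv]
  refine (((hasDerivAt_heatKer t x).mul ((hasDerivAt_id' x).fun_neg.div_const t))).deriv.trans ?_
  ring

lemma hasDerivAt_heatKer_time (x : ℝ) {t : ℝ} (ht : 0 < t) :
    HasDerivAt (fun τ => heatKer τ x) (iteratedDeriv 2 (heatKer t) x / 2) t := by
  have hsqrt : HasDerivAt (fun t => √t) (1 / (2 * √t)) t := hasDerivAt_sqrt ht.ne'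
  have h := ((hsqrt.fun_inv (sqrt_pos.mpr ht).ne').fun_mul
    (((hasDerivAt_const t (-(x ^ 2 / 2))).fun_div (hasDerivAt_id' t) ht.ne').exp)).const_mul
    (√(2 * π))⁻¹
  rw [show (fun τ => heatKer τ x) = _ from funext fun τ => heatKer_eq_mul_inv_sqrt_mul_exp τ x]
  refine h.congr_deriv ?_
  rw [iteratedDeriv_two_heatKer, heatKer_eq_mul_inv_sqrt_mul_exp]
  obtain ⟨r, hr, rfl⟩ : ∃ r > 0, t = r ^ 2 := ⟨√t, sqrt_pos.mpr ht, (sq_sqrt ht.le).symm⟩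
  rw [sqrt_sq hr.le]
  field_simp
  ring

lemma abs_iteratedDeriv_two_heatKer_le {x t : ℝ} (hx : x ≠ 0) (ht : 0 < t) :
    |iteratedDeriv 2 (heatKer t) x| ≤ 8 / x ^ 2 * heatKer t 0 := by
  set u := x ^ 2 / (2 * t) with hu
  have hx2 : 0 < x ^ 2 := by positivity
  have hu0 : 0 ≤ u := by positivity
  have hpoly : |4 * u ^ 2 - 2 * u| ≤ 8 * exp u := by
    have := quadratic_le_exp_of_nonneg hu0
    rw [abs_le]
    constructor <;> nlinarith
  have hsplit : x ^ 2 / t ^ 2 - 1 / t = (4 * u ^ 2 - 2 * u) / x ^ 2 := by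
    rw [hu]
    field_simp
    ring
  rw [iteratedDeriv_two_heatKer, heatKer_eq_heatKer_zero_mul_exp, hsplit, abs_mul, abs_mul,
    abs_div, abs_of_pos hx2, abs_of_pos (exp_pos _), abs_of_nonneg (heatKer_nonneg t 0)]
  calc heatKer t 0 * exp (-u) * (|4 * u ^ 2 - 2 * u| / x ^ 2)
      ≤ heatKer t 0 * exp (-u) * (8 * exp u / x ^ 2) := by
        gcongr
        exact mul_nonneg (heatKer_nonneg t 0) (exp_pos _).le
    _ = 8 / x ^ 2 * heatKer t 0 := by
      rw [exp_neg]
      field_simp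

lemma exp_neg_mul_mul_heatKer (s t x : ℝ) : exp (-s * t) * heatKer t x =
    (√(2 * π))⁻¹ * (exp (-s * t) * ((√t)⁻¹ * exp (-(x ^ 2 / 2) / t))) := by
  rw [heatKer_eq_mul_inv_sqrt_mul_exp]
  ring

lemma integrableOn_exp_neg_mul_mul_heatKer (x : ℝ) {s : ℝ} (hs : 0 < s) :
    IntegrableOn (fun t => exp (-s * t) * heatKer t x) (Ioi 0) := by
  simp_rw [exp_neg_mul_mul_heatKer]
  exact (integrableOn_exp_neg_mul_mul_inv_sqrt_mul_exp_neg_div hs (by positivity)).const_mul _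

lemma integrableOn_exp_neg_mul_mul_iteratedDeriv_two_heatKer {x s : ℝ} (hx : x ≠ 0)
    (hs : 0 < s) :
    IntegrableOn (fun t => exp (-s * t) * iteratedDeriv 2 (heatKer t) x) (Ioi 0) := by
  refine ((integrableOn_exp_neg_mul_mul_heatKer 0 hs).const_mul (8 / x ^ 2)).mono' ?_ ?_
  · simp_rw [iteratedDeriv_two_heatKer, heatKer]
    fun_prop
  · filter_upwards [ae_restrict_mem measurableSet_Ioi] with t ht
    rw [norm_mul, norm_of_nonneg (exp_pos _).le, mul_left_comm]
    exact mul_le_mul_of_nonneg_left (abs_iteratedDeriv_two_heatKer_le hx ht) (exp_pos _).le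

lemma tendsto_heatKer_nhdsGT_zero {x : ℝ} (hx : x ≠ 0) :
    Tendsto (fun t => heatKer t x) (𝓝[>] 0) (𝓝 0) := by
  have h := ((tendsto_rpow_mul_exp_neg_mul_atTop_nhds_zero (1 / 2) (x ^ 2 / 2)
    (by positivity)).comp tendsto_inv_nhdsGT_zero).const_mul (√(2 * π))⁻¹
  rw [mul_zero] at h
  refine h.congr fun t => ?_
  rw [Function.comp_apply, ← sqrt_eq_rpow, sqrt_inv, heatKer_eq_mul_inv_sqrt_mul_exp,
    div_eq_mul_inv _ t]

lemma tendsto_heatKer_atTop (x : ℝ) : Tendsto (fun t => heatKer t x) atTop (𝓝 0) := by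
  have hinv : Tendsto (fun t => (√t)⁻¹) atTop (𝓝 0) :=
    tendsto_inv_atTop_zero.comp tendsto_sqrt_atTop
  have hexp : Tendsto (fun t => exp (-(x ^ 2 / 2) / t)) atTop (𝓝 1) := by
    simpa [Function.comp_def] using (continuous_exp.tendsto 0).comp
      ((tendsto_const_nhds (x := -(x ^ 2 / 2))).div_atTop tendsto_id)
  simpa [heatKer_eq_mul_inv_sqrt_mul_exp] using (hinv.mul hexp).const_mul (√(2 * π))⁻¹

theorem integral_exp_neg_mul_mul_heatKer {x s : ℝ} (hx : x ≠ 0) (hs : 0 < s) :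
    ∫ t in Ioi 0, exp (-s * t) * heatKer t x = exp (-|x| * √(2 * s)) / √(2 * s) := by
  have hc : 0 < x ^ 2 / 2 := by positivity
  have hexponent : 2 * √(x ^ 2 / 2 * s) = |x| * √(2 * s) := by
    rw [show x ^ 2 / 2 * s = (|x| / 2) ^ 2 * (2 * s) by rw [div_pow, sq_abs]; ring,
      sqrt_mul (by positivity), sqrt_sq (by positivity)]
    ring
  simp_rw [exp_neg_mul_mul_heatKer]
  rw [integral_const_mul, integral_exp_neg_mul_mul_inv_sqrt_mul_exp_neg_div hs hc, hexponent,
    sqrt_div' _ hs.le, sqrt_mul zero_le_two, sqrt_mul zero_le_two]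
  field_simp

lemma integral_exp_neg_mul_mul_iteratedDeriv_two_heatKer {x s : ℝ} (hx : x ≠ 0) (hs : 0 < s) :
    ∫ t in Ioi 0, exp (-s * t) * iteratedDeriv 2 (heatKer t) x =
      2 * s * ∫ t in Ioi 0, exp (-s * t) * heatKer t x := by
  have hexp : ∀ t ∈ Ioi (0 : ℝ), HasDerivAt (fun t => exp (-s * t)) (exp (-s * t) * (-s)) t :=
    fun t _ => by simpa using ((hasDerivAt_id t).const_mul (-s)).exp
  have hexp_atTop : Tendsto (fun t => exp (-s * t)) atTop (𝓝 0) :=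
    tendsto_exp_comp_nhds_zero.mpr (tendsto_id.const_mul_atTop_of_neg (neg_neg_of_pos hs))
  have hexp_zero : Tendsto (fun t => exp (-s * t)) (𝓝[>] 0) (𝓝 1) :=
    ((by fun_prop : Continuous fun t => exp (-s * t)).tendsto' 0 1 (by simp)).mono_left
      nhdsWithin_le_nhds
  have hparts := integral_Ioi_mul_deriv_eq_deriv_mul hexp
    (fun t ht => hasDerivAt_heatKer_time x ht)
    (by simpa only [IntegrableOn, Pi.mul_def, mul_div_assoc] using
      (integrableOn_exp_neg_mul_mul_iteratedDeriv_two_heatKer hx hs).div_const 2)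
    (by simpa only [IntegrableOn, Pi.mul_def, mul_right_comm _ (-s)] using
      (integrableOn_exp_neg_mul_mul_heatKer x hs).mul_const (-s))
    (by simpa only [Pi.mul_def, one_mul] using hexp_zero.mul (tendsto_heatKer_nhdsGT_zero hx))
    (by simpa only [Pi.mul_def, mul_zero] using hexp_atTop.mul (tendsto_heatKer_atTop x))
  rw [sub_self, zero_sub] at hparts
  calc ∫ t in Ioi 0, exp (-s * t) * iteratedDeriv 2 (heatKer t) x
      = 2 * ∫ t in Ioi 0, exp (-s * t) * (iteratedDeriv 2 (heatKer t) x / 2) := by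
        rw [← integral_const_mul]
        congr with t
        ring
    _ = 2 * s * ∫ t in Ioi 0, exp (-s * t) * heatKer t x := by
        rw [hparts, ← integral_neg, ← integral_const_mul, ← integral_const_mul]
        congr with t
        ring

/-- Laplace transform (in time) of the second spatial derivative of the heat kernel. -/
theorem laplace_transform_heat_kernel_second_deriv (x : ℝ) (hx : x ≠ 0) (s : ℝ) (hs : 0 < s) :
    ∫ t in Set.Ioi (0:ℝ), Real.exp (-s * t) * iteratedDeriv 2 (fun y => heatKer t y) x =
      Real.sqrt (2 * s) * Real.exp (-|x| * Real.sqrt (2 * s)) := by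
  rw [integral_exp_neg_mul_mul_iteratedDeriv_two_heatKer hx hs,
    integral_exp_neg_mul_mul_heatKer hx hs]
  have h2s : √(2 * s) ^ 2 = 2 * s := sq_sqrt (by positivity)
  field_simp
  rw [h2s]
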